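/- Let k ∈ ℕ, let λ and μ be partitions with λ^T_1 + μ_1 ≤ k + 1, and define τ^λ_μ = (ρ(k) + 2μ^T)^T + 2λ, where partition addition is componentwise and ^T denotes conjugation. Then τ^λ_μ is a partition, and |τ^λ_μ| = k(k+1)/2 + 2|λ| + 2|μ|. -/

import Mathlib

open scoped BigOperators

/-- The conjugate of a partition `p` (0-indexed): `(p^T)_{j+1} = #{i : p_i ≥ j+1}`. -/
noncomputable def conjPart (p : ℕ → ℕ) (j : ℕ) : ℕ := Set.ncard {i : ℕ | j + 1 ≤ p i}

/-- The 2-separated partition `τ^λ_μ = (ρ(k) + 2μ^T)^T + 2λ`, with `ρ(k)` the staircase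
`(k, k-1, …, 1)` (0-indexed: `ρ(k)_i = k - i`) and componentwise addition. -/
noncomputable def tauP (k : ℕ) (lam mu : ℕ → ℕ) : ℕ → ℕ :=
  fun i => conjPart (fun j => (k - j) + 2 * conjPart mu j) i + 2 * lam i

/-!
The conjugate `p^T` of a finitely supported sequence `p` is antitone, vanishes beyond `max p`,
and `|p^T| = |p|`, since both sides count the cells `{(i, j) : j < p i}`, by columns and by
rows. Applied to `ρ(k) + 2μ^T` this gives `|τ^λ_μ| = |ρ(k)| + 2|μ^T| + 2|λ|`.
-/

lemma le_sum_range_of_eq_zero {p : ℕ → ℕ} {N : ℕ} (hN : ∀ i ≥ N, p i = 0) (i : ℕ) :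
    p i ≤ ∑ i ∈ Finset.range N, p i := by
  rcases lt_or_ge i N with h | h
  · exact Finset.single_le_sum (fun _ _ => Nat.zero_le _) (Finset.mem_range.mpr h)
  · simp [hN i h]

lemma sum_range_eq_of_eq_zero {p : ℕ → ℕ} {N M : ℕ} (hN : ∀ i ≥ N, p i = 0) (hNM : N ≤ M) :
    ∑ i ∈ Finset.range M, p i = ∑ i ∈ Finset.range N, p i := by
  refine (Finset.sum_subset (Finset.range_subset_range.mpr hNM) fun i _ hi => ?_).symm
  exact hN i (by simpa using hi)

lemma sum_range_staircase (k : ℕ) : ∑ j ∈ Finset.range k, (k - j) = k * (k + 1) / 2 := by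
  calc ∑ j ∈ Finset.range k, (k - j)
      = ∑ j ∈ Finset.range k, ((k - 1 - j) + 1) :=
        Finset.sum_congr rfl fun j hj => by simp only [Finset.mem_range] at hj; omega
    _ = ∑ j ∈ Finset.range k, (j + 1) := Finset.sum_range_reflect (· + 1) k
    _ = ∑ j ∈ Finset.range (k + 1), j := (Finset.sum_range_succ' id k).symm
    _ = k * (k + 1) / 2 := by rw [Finset.sum_range_id, Nat.add_sub_cancel, Nat.mul_comm]

section Conjugate

variable {p : ℕ → ℕ} {N : ℕ}

lemma conjPart_eq_card_filter (hN : ∀ i ≥ N, p i = 0) (j : ℕ) :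
    conjPart p j = ((Finset.range N).filter (fun i => j + 1 ≤ p i)).card := by
  rw [conjPart, ← Set.ncard_coe_finset]
  congr 1
  ext i
  simp only [Set.mem_ofPred_eq, Finset.coe_filter, Finset.mem_range, iff_and_self]
  intro hi
  by_contra! h
  have := hN i h
  omega

lemma conjPart_le (hN : ∀ i ≥ N, p i = 0) (j : ℕ) : conjPart p j ≤ N := by
  rw [conjPart_eq_card_filter hN]
  exact (Finset.card_filter_le _ _).trans (Finset.card_range N).le

lemma conjPart_antitone (hN : ∀ i ≥ N, p i = 0) : Antitone (conjPart p) := by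
  intro a b hab
  simp only [conjPart_eq_card_filter hN]
  exact Finset.card_le_card (Finset.monotone_filter_right _ fun i _ (h : b + 1 ≤ p i) => by omega)

lemma conjPart_eq_zero {B : ℕ} (hB : ∀ i, p i ≤ B) {j : ℕ} (hj : B ≤ j) : conjPart p j = 0 := by
  have hempty : {i | j + 1 ≤ p i} = ∅ :=
    Set.eq_empty_of_forall_notMem fun i (hi : j + 1 ≤ p i) => by have := hB i; omega
  rw [conjPart, hempty, Set.ncard_empty]

lemma sum_range_conjPart (hN : ∀ i ≥ N, p i = 0) {M : ℕ} (hM : ∀ i, p i ≤ M) :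
    ∑ j ∈ Finset.range M, conjPart p j = ∑ i ∈ Finset.range N, p i := by
  simp only [conjPart_eq_card_filter hN, Finset.card_filter]
  rw [Finset.sum_comm]
  refine Finset.sum_congr rfl fun i _ => ?_
  have hcol : (Finset.range M).filter (fun j => j + 1 ≤ p i) = Finset.range (p i) := by
    ext j
    simp only [Finset.mem_filter, Finset.mem_range]
    have := hM i
    omega
  rw [← Finset.card_filter, hcol, Finset.card_range]

end Conjugate

noncomputable def staircaseAddTwoConj (k : ℕ) (mu : ℕ → ℕ) (j : ℕ) : ℕ :=
  (k - j) + 2 * conjPart mu j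

lemma tauP_eq (k : ℕ) (lam mu : ℕ → ℕ) (i : ℕ) :
    tauP k lam mu i = conjPart (staircaseAddTwoConj k mu) i + 2 * lam i := rfl

section Tau

variable {k : ℕ} {mu : ℕ → ℕ} {Nm : ℕ}

lemma staircaseAddTwoConj_le (hNm : ∀ i ≥ Nm, mu i = 0) (j : ℕ) :
    staircaseAddTwoConj k mu j ≤ k + 2 * Nm := by
  have := conjPart_le hNm j
  unfold staircaseAddTwoConj
  omega

lemma staircaseAddTwoConj_eq_zero {B : ℕ} (hB : ∀ i, mu i ≤ B) {j : ℕ} (hj : k + B ≤ j) :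
    staircaseAddTwoConj k mu j = 0 := by
  rw [staircaseAddTwoConj, conjPart_eq_zero hB (by omega)]
  omega

lemma sum_range_staircaseAddTwoConj (hNm : ∀ i ≥ Nm, mu i = 0) {B : ℕ} (hB : ∀ i, mu i ≤ B) :
    ∑ j ∈ Finset.range (k + B), staircaseAddTwoConj k mu j
      = k * (k + 1) / 2 + 2 * ∑ i ∈ Finset.range Nm, mu i := by
  have hstair : ∑ j ∈ Finset.range (k + B), (k - j) = k * (k + 1) / 2 := by
    rw [sum_range_eq_of_eq_zero (fun j (hj : j ≥ k) => Nat.sub_eq_zero_of_le hj) (by omega),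
      sum_range_staircase]
  have hconj : ∑ j ∈ Finset.range (k + B), conjPart mu j = ∑ i ∈ Finset.range Nm, mu i :=
    sum_range_conjPart hNm fun i => (hB i).trans (by omega)
  simp only [staircaseAddTwoConj, Finset.sum_add_distrib, ← Finset.mul_sum, hstair, hconj]

end Tau

theorem stmt2_general (k : ℕ) (lam mu : ℕ → ℕ)
    (hlam : Antitone lam)
    (Nl Nm : ℕ) (hNl : ∀ i ≥ Nl, lam i = 0) (hNm : ∀ i ≥ Nm, mu i = 0) :
    Antitone (tauP k lam mu) ∧
    ∃ M : ℕ, (∀ i ≥ M, tauP k lam mu i = 0) ∧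
      ∑ i ∈ Finset.range M, tauP k lam mu i
        = k * (k + 1) / 2 + 2 * (∑ i ∈ Finset.range Nl, lam i)
            + 2 * (∑ i ∈ Finset.range Nm, mu i) := by
  set B := ∑ i ∈ Finset.range Nm, mu i
  have hB : ∀ i, mu i ≤ B := le_sum_range_of_eq_zero hNm
  have hg : ∀ j ≥ k + B, staircaseAddTwoConj k mu j = 0 :=
    fun j hj => staircaseAddTwoConj_eq_zero hB hj
  have hgM : ∀ j, staircaseAddTwoConj k mu j ≤ k + 2 * Nm + Nl :=
    fun j => (staircaseAddTwoConj_le hNm j).trans (by omega)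
  refine ⟨fun a b hab => ?_, k + 2 * Nm + Nl, fun i hi => ?_, ?_⟩
  · simp only [tauP_eq]
    exact add_le_add (conjPart_antitone hg hab) (Nat.mul_le_mul_left 2 (hlam hab))
  · rw [tauP_eq, conjPart_eq_zero hgM hi, hNl i (by omega)]
  · simp only [tauP_eq, Finset.sum_add_distrib, ← Finset.mul_sum]
    rw [sum_range_conjPart hg hgM, sum_range_staircaseAddTwoConj hNm hB,
      sum_range_eq_of_eq_zero hNl (by omega)]
    ring

/-- for partitions `λ, μ` with `λ^T_1 + μ_1 ≤ k + 1`, the sequence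
`τ^λ_μ` is a partition (antitone, finitely supported) and
`|τ^λ_μ| = k(k+1)/2 + 2|λ| + 2|μ|`. -/
theorem stmt2 (k : ℕ) (lam mu : ℕ → ℕ)
    (hlam : Antitone lam) (hmu : Antitone mu)
    (Nl Nm : ℕ) (hNl : ∀ i ≥ Nl, lam i = 0) (hNm : ∀ i ≥ Nm, mu i = 0)
    (hsep : conjPart lam 0 + mu 0 ≤ k + 1) :
    Antitone (tauP k lam mu) ∧
    ∃ M : ℕ, (∀ i ≥ M, tauP k lam mu i = 0) ∧
      ∑ i ∈ Finset.range M, tauP k lam mu i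
        = k * (k + 1) / 2 + 2 * (∑ i ∈ Finset.range Nl, lam i)
            + 2 * (∑ i ∈ Finset.range Nm, mu i) :=
  stmt2_general k lam mu hlam Nl Nm hNl hNm
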